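/- Classical symmetric rotor equations: let d : ℝ → M₄(ℂ) be a self-consistent trajectory and define Ω₁(t) := Re Tr(d(t)·A↓A↑), Ω₂(t) := Im Tr(d(t)·A↓A↑), and Ω₃(t) := 2(μ−λ) + γ·(1 − Re Tr(d(t)·(n↑+n↓))). Then Ω₁, Ω₂, Ω₃ are differentiable and satisfy, for every t ∈ ℝ: Ω₁′(t) = −Ω₃(t)·Ω₂(t), Ω₂′(t) = Ω₃(t)·Ω₁(t), and Ω₃′(t) = 0. -/

import Mathlib

open Matrix
open scoped ComplexOrder

noncomputable section

/-- `M₄(ℂ)`, the algebra of 4×4 complex matrices, identified with the linear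
operators on the one-site fermionic Fock space `ℂ⁴`. -/
abbrev M4 : Type := Matrix (Fin 4) (Fin 4) ℂ

noncomputable instance : NormedAddCommGroup M4 := Matrix.normedAddCommGroup
noncomputable instance : NormedSpace ℝ M4 := Matrix.normedSpace

/-- The canonical anticommutation relations for the two matrices `A↑ = Aup`,
`A↓ = Adn`: `Aₛ·Aₜ + Aₜ·Aₛ = 0` and `Aₛ·Aₜ* + Aₜ*·Aₛ = δ_{s,t}·1` for
`s, t ∈ {↑,↓}`. -/
def CAR (Aup Adn : M4) : Prop :=
  Aup * Aup + Aup * Aup = 0 ∧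
  Aup * Adn + Adn * Aup = 0 ∧
  Adn * Adn + Adn * Adn = 0 ∧
  Aup * Aupᴴ + Aupᴴ * Aup = 1 ∧
  Aup * Adnᴴ + Adnᴴ * Aup = 0 ∧
  Adn * Aupᴴ + Aupᴴ * Adn = 0 ∧
  Adn * Adnᴴ + Adnᴴ * Adn = 1

/-- `dh(c) := 2λ n↑n↓ − μ(n↑+n↓) − h(n↑−n↓) − γ(c·A↑*A↓* + c̄·A↓A↑)`,
where `nₛ := Aₛ*·Aₛ`. -/
def dh (Aup Adn : M4) (mu h lam gam : ℝ) (c : ℂ) : M4 :=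
  (2 * lam : ℂ) • (Aupᴴ * Aup * (Adnᴴ * Adn))
    - (mu : ℂ) • (Aupᴴ * Aup + Adnᴴ * Adn)
    - (h : ℂ) • (Aupᴴ * Aup - Adnᴴ * Adn)
    - (gam : ℂ) • (c • (Aupᴴ * Adnᴴ) + (starRingEnd ℂ c) • (Adn * Aup))

/-- A density matrix: Hermitian, positive semidefinite, of trace 1. -/
def IsDensityMatrix (d : M4) : Prop :=
  d.IsHermitian ∧ d.PosSemidef ∧ d.trace = 1

/-- A self-consistent trajectory: a differentiable map `d : ℝ → M₄(ℂ)` such that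
`d t` is a density matrix for all `t` and
`d′(t) = −i·[dh(Tr(d(t)·A↓A↑)), d(t)]` for all `t ∈ ℝ`. -/
def SelfConsistent (Aup Adn : M4) (mu h lam gam : ℝ) (d : ℝ → M4) : Prop :=
  (∀ t : ℝ, IsDensityMatrix (d t)) ∧
  ∀ t : ℝ, HasDerivAt d
      ((-Complex.I) •
        (dh Aup Adn mu h lam gam ((d t * (Adn * Aup)).trace) * d t
          - d t * dh Aup Adn mu h lam gam ((d t * (Adn * Aup)).trace))) t

/-!
Along the trajectory, `d/dt Tr(d B) = -i Tr(d [B, dh])`. Normal ordering with the CAR gives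
`[A↓A↑, dh(c)] = 2(λ-μ) A↓A↑ - γ c (1 - n↑ - n↓)` and
`[n↑ + n↓, dh(c)] = 2γ (c̄ A↓A↑ - c A↑*A↓*)`. Since `d` is Hermitian of trace one, the first
identity says that `c = Tr(d A↓A↑)` obeys `c' = i Ω₃ c` with `Ω₃` real, so `(Re c, Im c)` rotates
with angular velocity `Ω₃`; the second gives `Tr(d (n↑ + n↓))' = 2γ (c̄ c - c c̄) = 0`, so `Ω₃` is
constant.
-/

open Complex (I)

namespace Matrix

theorem eq_zero_of_add_self_eq_zero {m n K : Type*} [Field K] [CharZero K] {x : Matrix m n K}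
    (h : x + x = 0) : x = 0 :=
  (smul_eq_zero.mp ((two_smul K x).trans h)).resolve_left two_ne_zero

variable {n : Type*} [Fintype n]

theorem trace_commutator_mul {R : Type*} [CommRing R] (H ρ B : Matrix n n R) :
    ((H * ρ - ρ * H) * B).trace = (ρ * (B * H - H * B)).trace := by
  simp only [Matrix.sub_mul, Matrix.mul_sub, trace_sub, Matrix.mul_assoc]
  rw [trace_mul_comm H, Matrix.mul_assoc]

theorem IsHermitian.trace_mul_conjTranspose {R : Type*} [CommSemiring R] [StarRing R]
    {ρ : Matrix n n R} (hρ : ρ.IsHermitian) (M : Matrix n n R) :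
    (ρ * Mᴴ).trace = star (ρ * M).trace := by
  rw [← trace_conjTranspose, conjTranspose_mul, hρ.eq, trace_mul_comm]

theorem IsHermitian.ofReal_re_trace_mul {ρ M : Matrix n n ℂ} (hρ : ρ.IsHermitian)
    (hM : M.IsHermitian) : (((ρ * M).trace).re : ℂ) = (ρ * M).trace :=
  Complex.conj_eq_iff_re.mp (by simpa [hM.eq] using (hρ.trace_mul_conjTranspose M).symm)

section Calculus
attribute [local instance] Matrix.normedAddCommGroup Matrix.normedSpace

theorem hasDerivAt_trace_mul {ρ : ℝ → Matrix n n ℂ} {ρ' : Matrix n n ℂ} {t : ℝ}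
    (hρ : HasDerivAt ρ ρ' t) (B : Matrix n n ℂ) :
    HasDerivAt (fun s => (ρ s * B).trace) (ρ' * B).trace t :=
  let L : Matrix n n ℂ →ₗ[ℝ] ℂ :=
    ((traceLinearMap n ℂ ℂ).comp (LinearMap.mulRight ℂ B)).restrictScalars ℝ
  (LinearMap.toContinuousLinearMap L).hasFDerivAt.comp_hasDerivAt t hρ

theorem hasDerivAt_trace_mul_of_vonNeumann [DecidableEq n] {ρ : ℝ → Matrix n n ℂ}
    {H : Matrix n n ℂ} {t : ℝ} (hρ : HasDerivAt ρ (-I • (H * ρ t - ρ t * H)) t)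
    (B : Matrix n n ℂ) :
    HasDerivAt (fun s => (ρ s * B).trace) (-I * (ρ t * (B * H - H * B)).trace) t := by
  simpa only [smul_mul_assoc, trace_smul, trace_commutator_mul, smul_eq_mul]
    using hasDerivAt_trace_mul hρ B

end Calculus

end Matrix

theorem HasDerivAt.re_comp {f : ℝ → ℂ} {f' : ℂ} {t : ℝ} (hf : HasDerivAt f f' t) :
    HasDerivAt (fun s => (f s).re) f'.re t :=
  Complex.reCLM.hasFDerivAt.comp_hasDerivAt t hf

theorem HasDerivAt.im_comp {f : ℝ → ℂ} {f' : ℂ} {t : ℝ} (hf : HasDerivAt f f' t) :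
    HasDerivAt (fun s => (f s).im) f'.im t :=
  Complex.imCLM.hasFDerivAt.comp_hasDerivAt t hf

theorem HasDerivAt.re_im_of_rotation {f : ℝ → ℂ} {ω t : ℝ} (hf : HasDerivAt f (I * ω * f t) t) :
    HasDerivAt (fun s => (f s).re) (-(ω * (f t).im)) t ∧
      HasDerivAt (fun s => (f s).im) (ω * (f t).re) t := by
  constructor
  · simpa [Complex.mul_re] using hf.re_comp
  · simpa [Complex.mul_im] using hf.im_comp

namespace CAR
variable {a b : M4}

/- The relations are stated as `x * (y * w) = …`: the commutators below are normal-ordered after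
multiplying them on the right by a free `w`, so that, right-associated, every product of two
adjacent factors has this form. -/

theorem up_mul_up (hc : CAR a b) (w : M4) : a * (a * w) = 0 := by
  rw [← Matrix.mul_assoc, eq_zero_of_add_self_eq_zero hc.1, Matrix.zero_mul]

theorem dn_mul_dn (hc : CAR a b) (w : M4) : b * (b * w) = 0 := by
  rw [← Matrix.mul_assoc, eq_zero_of_add_self_eq_zero hc.2.2.1, Matrix.zero_mul]

theorem upH_mul_upH (hc : CAR a b) (w : M4) : aᴴ * (aᴴ * w) = 0 := by
  rw [← Matrix.mul_assoc, ← conjTranspose_mul, eq_zero_of_add_self_eq_zero hc.1,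
    conjTranspose_zero, Matrix.zero_mul]

theorem dnH_mul_dnH (hc : CAR a b) (w : M4) : bᴴ * (bᴴ * w) = 0 := by
  rw [← Matrix.mul_assoc, ← conjTranspose_mul, eq_zero_of_add_self_eq_zero hc.2.2.1,
    conjTranspose_zero, Matrix.zero_mul]

theorem up_mul_dn (hc : CAR a b) (w : M4) : a * (b * w) = -(b * (a * w)) := by
  rw [← Matrix.mul_assoc, ← Matrix.mul_assoc, eq_neg_of_add_eq_zero_left hc.2.1, Matrix.neg_mul]

theorem dnH_mul_upH (hc : CAR a b) (w : M4) : bᴴ * (aᴴ * w) = -(aᴴ * (bᴴ * w)) := by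
  have h := congrArg conjTranspose hc.2.1
  rw [conjTranspose_add, conjTranspose_mul, conjTranspose_mul, conjTranspose_zero] at h
  rw [← Matrix.mul_assoc, ← Matrix.mul_assoc, eq_neg_of_add_eq_zero_left h, Matrix.neg_mul]

theorem up_mul_dnH (hc : CAR a b) (w : M4) : a * (bᴴ * w) = -(bᴴ * (a * w)) := by
  rw [← Matrix.mul_assoc, ← Matrix.mul_assoc, eq_neg_of_add_eq_zero_left hc.2.2.2.2.1,
    Matrix.neg_mul]

theorem dn_mul_upH (hc : CAR a b) (w : M4) : b * (aᴴ * w) = -(aᴴ * (b * w)) := by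
  rw [← Matrix.mul_assoc, ← Matrix.mul_assoc, eq_neg_of_add_eq_zero_left hc.2.2.2.2.2.1,
    Matrix.neg_mul]

theorem up_mul_upH (hc : CAR a b) (w : M4) : a * (aᴴ * w) = w - aᴴ * (a * w) := by
  rw [← Matrix.mul_assoc, ← Matrix.mul_assoc, eq_sub_of_add_eq hc.2.2.2.1, Matrix.sub_mul,
    Matrix.one_mul]

theorem dn_mul_dnH (hc : CAR a b) (w : M4) : b * (bᴴ * w) = w - bᴴ * (b * w) := by
  rw [← Matrix.mul_assoc, ← Matrix.mul_assoc, eq_sub_of_add_eq hc.2.2.2.2.2.2, Matrix.sub_mul,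
    Matrix.one_mul]

theorem commutator_pair_dh (hc : CAR a b) (mu h lam gam : ℝ) (c : ℂ) :
    b * a * dh a b mu h lam gam c - dh a b mu h lam gam c * (b * a) =
      (2 * (lam - mu) : ℂ) • (b * a) - (gam * c : ℂ) • (1 - (aᴴ * a + bᴴ * b)) := by
  set H := dh a b mu h lam gam c with hH
  suffices key : ∀ w : M4, (b * a * H - H * (b * a)) * w =
      ((2 * (lam - mu) : ℂ) • (b * a) - (gam * c : ℂ) • (1 - (aᴴ * a + bᴴ * b))) * w by
    simpa using key 1
  intro w
  simp only [hH, dh, add_mul, sub_mul, mul_add, mul_sub, smul_mul_assoc, mul_smul_comm, mul_assoc,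
    one_mul, hc.up_mul_up, hc.dn_mul_dn, hc.up_mul_dn, hc.up_mul_dnH, hc.dn_mul_upH,
    hc.up_mul_upH, hc.dn_mul_dnH, mul_neg, neg_mul, mul_zero, smul_neg, smul_zero, smul_sub,
    smul_add]
  module

theorem commutator_number_dh (hc : CAR a b) (mu h lam gam : ℝ) (c : ℂ) :
    (aᴴ * a + bᴴ * b) * dh a b mu h lam gam c - dh a b mu h lam gam c * (aᴴ * a + bᴴ * b) =
      (2 * gam : ℂ) • (starRingEnd ℂ c • (b * a) - c • (aᴴ * bᴴ)) := by
  set H := dh a b mu h lam gam c with hH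
  suffices key : ∀ w : M4, ((aᴴ * a + bᴴ * b) * H - H * (aᴴ * a + bᴴ * b)) * w =
      ((2 * gam : ℂ) • (starRingEnd ℂ c • (b * a) - c • (aᴴ * bᴴ))) * w by
    simpa using key 1
  intro w
  simp only [hH, dh, add_mul, sub_mul, mul_add, mul_sub, smul_mul_assoc, mul_smul_comm, mul_assoc,
    hc.up_mul_up, hc.dn_mul_dn, hc.upH_mul_upH, hc.dnH_mul_dnH, hc.up_mul_dn, hc.dnH_mul_upH,
    hc.up_mul_dnH, hc.dn_mul_upH, hc.up_mul_upH, hc.dn_mul_dnH, mul_neg, neg_mul, mul_zero,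
    smul_neg, smul_zero, smul_sub, smul_add]
  module

end CAR

namespace SelfConsistent
variable {Aup Adn : M4} {mu h lam gam : ℝ} {d : ℝ → M4}

theorem hasDerivAt_trace_mul_pair (hCAR : CAR Aup Adn)
    (hd : SelfConsistent Aup Adn mu h lam gam d) (t : ℝ) :
    HasDerivAt (fun s => (d s * (Adn * Aup)).trace)
      (I * (2 * (mu - lam) + gam * (1 - (d t * (Aupᴴ * Aup + Adnᴴ * Adn)).trace))
        * (d t * (Adn * Aup)).trace) t := by
  convert hasDerivAt_trace_mul_of_vonNeumann (hd.2 t) (Adn * Aup) using 1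
  rw [hCAR.commutator_pair_dh, Matrix.mul_sub, mul_smul_comm, mul_smul_comm, trace_sub,
    trace_smul, trace_smul, Matrix.mul_sub, Matrix.mul_one, trace_sub, (hd.1 t).2.2, smul_eq_mul,
    smul_eq_mul]
  ring

theorem hasDerivAt_trace_mul_number (hCAR : CAR Aup Adn)
    (hd : SelfConsistent Aup Adn mu h lam gam d) (t : ℝ) :
    HasDerivAt (fun s => (d s * (Aupᴴ * Aup + Adnᴴ * Adn)).trace) 0 t := by
  convert hasDerivAt_trace_mul_of_vonNeumann (hd.2 t) (Aupᴴ * Aup + Adnᴴ * Adn) using 1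
  have hconj : (d t * (Aupᴴ * Adnᴴ)).trace = starRingEnd ℂ (d t * (Adn * Aup)).trace := by
    rw [← conjTranspose_mul, (hd.1 t).1.trace_mul_conjTranspose]; rfl
  rw [hCAR.commutator_number_dh, mul_smul_comm, Matrix.mul_sub, mul_smul_comm, mul_smul_comm,
    trace_smul, trace_sub, trace_smul, trace_smul, hconj, smul_eq_mul, smul_eq_mul, smul_eq_mul]
  ring

end SelfConsistent

theorem symmetric_rotor_equations (Aup Adn : M4) (hCAR : CAR Aup Adn)
    (mu h lam gam : ℝ)
    (d : ℝ → M4) (hd : SelfConsistent Aup Adn mu h lam gam d) :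
    ∀ t : ℝ,
      HasDerivAt (fun s : ℝ => ((d s * (Adn * Aup)).trace).re)
        (-((2 * (mu - lam)
              + gam * (1 - ((d t * (Aupᴴ * Aup + Adnᴴ * Adn)).trace).re))
            * ((d t * (Adn * Aup)).trace).im)) t ∧
      HasDerivAt (fun s : ℝ => ((d s * (Adn * Aup)).trace).im)
        ((2 * (mu - lam)
            + gam * (1 - ((d t * (Aupᴴ * Aup + Adnᴴ * Adn)).trace).re))
          * ((d t * (Adn * Aup)).trace).re) t ∧
      HasDerivAt (fun s : ℝ =>
          2 * (mu - lam)
            + gam * (1 - ((d s * (Aupᴴ * Aup + Adnᴴ * Adn)).trace).re)) 0 t := by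
  intro t
  have hN := (hd.1 t).1.ofReal_re_trace_mul
    ((isHermitian_conjTranspose_mul_self Aup).add (isHermitian_conjTranspose_mul_self Adn))
  have hpair := hd.hasDerivAt_trace_mul_pair hCAR t
  rw [← hN] at hpair
  obtain ⟨hre, him⟩ := HasDerivAt.re_im_of_rotation
    (ω := 2 * (mu - lam) + gam * (1 - ((d t * (Aupᴴ * Aup + Adnᴴ * Adn)).trace).re))
    (by push_cast; exact hpair)
  refine ⟨hre, him, ?_⟩
  simpa using
    (((hd.hasDerivAt_trace_mul_number hCAR t).re_comp.const_sub 1).const_mul gam).const_add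
      (2 * (mu - lam))
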